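/- arXiv:1811.04434 — 3 statements merged into one kernel-verified Lean document; each statement's English description precedes it below -/
import Mathlib

section
/- If μ : ℂ → ℂ is measurable with support contained in the ball B(0,R) for some R > 0, and the monotonic majorant μ*(t) = esssup{|μ(z)| : 0 < |Im z| < |t|} satisfies ∫₀^R (μ*(t)/t)·log(1/t) dt < ∞, then there exists M > 0 such that for all a ∈ ℝ, ∬_ℂ |μ(z)|/(|z−a|·|Im z|) dx dy ≤ M. -/
open MeasureTheory Complex Set

lemma side (b u L : ℝ) (hbu : b < u) (hL : 0 ≤ L) :
    ∫⁻ x in Ioo u (u + L), ENNReal.ofReal (x - b)⁻¹ ≤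
      ENNReal.ofReal (Real.log (1 + L / (u - b))) := by
  have hub : 0 < u - b := sub_pos.2 hbu
  have hcont : ContinuousOn (fun x : ℝ => (x - b)⁻¹) (Set.uIcc u (u + L)) := by
    apply ContinuousOn.inv₀ (by fun_prop)
    intro x hx
    rw [Set.uIcc_of_le (by linarith)] at hx
    have := hx.1; intro h; nlinarith [sub_eq_zero.mp h]
  have hii : IntervalIntegrable (fun x : ℝ => (x - b)⁻¹) volume u (u + L) :=
    hcont.intervalIntegrable
  have hint : IntegrableOn (fun x : ℝ => (x - b)⁻¹) (Ioc u (u + L)) volume := by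
    rwa [intervalIntegrable_iff_integrableOn_Ioc_of_le (by linarith)] at hii
  have h1 : ∫⁻ x in Ioo u (u + L), ENNReal.ofReal (x - b)⁻¹
      = ∫⁻ x in Ioc u (u + L), ENNReal.ofReal (x - b)⁻¹ :=
    setLIntegral_congr Ioo_ae_eq_Ioc
  have h2 : ∫⁻ x in Ioc u (u + L), ENNReal.ofReal (x - b)⁻¹
      = ENNReal.ofReal (∫ x in Ioc u (u + L), (x - b)⁻¹) := by
    rw [ofReal_integral_eq_lintegral_ofReal hint]
    filter_upwards [ae_restrict_mem measurableSet_Ioc] with x hx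
    have : 0 < x - b := by have := hx.1; linarith
    positivity
  have h3 : ∫ x in Ioc u (u + L), (x - b)⁻¹ = Real.log (1 + L / (u - b)) := by
    rw [← intervalIntegral.integral_of_le (by linarith)]
    have : (∫ x in u..(u + L), (x - b)⁻¹) = ∫ x in (u - b)..(u + L - b), x⁻¹ :=
      intervalIntegral.integral_comp_sub_right (fun x => x⁻¹) b
    rw [this, integral_inv]
    · congr 1
      field_simp
      ring
    · rw [Set.uIcc_of_le (by linarith)]
      intro h
      have := h.1; linarith
  rw [h1, h2, h3]

lemma side' (b v L : ℝ) (hvb : v < b) (hL : 0 ≤ L) :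
    ∫⁻ x in Ioo (v - L) v, ENNReal.ofReal (b - x)⁻¹ ≤
      ENNReal.ofReal (Real.log (1 + L / (b - v))) := by
  have hub : 0 < b - v := sub_pos.2 hvb
  have hcont : ContinuousOn (fun x : ℝ => (b - x)⁻¹) (Set.uIcc (v - L) v) := by
    apply ContinuousOn.inv₀ (by fun_prop)
    intro x hx
    rw [Set.uIcc_of_le (by linarith)] at hx
    have := hx.2; intro h; nlinarith [sub_eq_zero.mp h]
  have hii : IntervalIntegrable (fun x : ℝ => (b - x)⁻¹) volume (v - L) v :=
    hcont.intervalIntegrable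
  have hint : IntegrableOn (fun x : ℝ => (b - x)⁻¹) (Ioc (v - L) v) volume := by
    rwa [intervalIntegrable_iff_integrableOn_Ioc_of_le (by linarith)] at hii
  have h1 : ∫⁻ x in Ioo (v - L) v, ENNReal.ofReal (b - x)⁻¹
      = ∫⁻ x in Ioc (v - L) v, ENNReal.ofReal (b - x)⁻¹ :=
    setLIntegral_congr Ioo_ae_eq_Ioc
  have h2 : ∫⁻ x in Ioc (v - L) v, ENNReal.ofReal (b - x)⁻¹
      = ENNReal.ofReal (∫ x in Ioc (v - L) v, (b - x)⁻¹) := by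
    rw [ofReal_integral_eq_lintegral_ofReal hint]
    filter_upwards [ae_restrict_mem measurableSet_Ioc] with x hx
    have : 0 < b - x := by have := hx.2; linarith
    positivity
  have h3 : ∫ x in Ioc (v - L) v, (b - x)⁻¹ = Real.log (1 + L / (b - v)) := by
    rw [← intervalIntegral.integral_of_le (by linarith)]
    have : (∫ x in (v - L)..v, (b - x)⁻¹) = ∫ x in (b - v)..(b - (v - L)), x⁻¹ :=
      intervalIntegral.integral_comp_sub_left (fun x => x⁻¹) b
    rw [this, integral_inv]
    · congr 1
      field_simp
      ring
    · rw [Set.uIcc_of_le (by linarith)]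
      intro h
      have := h.1; linarith
  rw [h1, h2, h3]

lemma xlem (R a c : ℝ) (hR : 0 < R) (hc : 0 < c) :
    ∫⁻ x in Ioo (-R) R, ENNReal.ofReal (max |x - a| c)⁻¹ ≤
      ENNReal.ofReal (2 + 2 * Real.log (1 + 2 * R / c)) := by
  set u := max (a + c) (-R) with hu
  set v := min (a - c) R with hv
  have hlog0 : 0 ≤ Real.log (1 + 2 * R / c) := by
    apply Real.log_nonneg; have : 0 ≤ 2 * R / c := by positivity
    linarith
  have hcover : Ioo (-R) R ⊆ (Icc (a - c) (a + c) ∪ Ioo u (u + 2 * R)) ∪ Ioo (v - 2 * R) v := by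
    intro x hx
    rcases le_or_gt (|x - a|) c with h | h
    · left; left
      rw [abs_le] at h
      constructor <;> linarith [h.1, h.2]
    · rcases lt_or_ge x a with hxa | hxa
      · right
        have h1 : x < a - c := by
          rw [abs_sub_comm, _root_.abs_of_pos (by linarith)] at h; linarith
        constructor
        · have : -R ≤ v - 2 * R ∨ v - 2 * R < x := by
            right
            have : v ≤ R := min_le_right _ _
            linarith [hx.1]
          have hvR : v ≤ R := min_le_right _ _
          linarith [hx.1]
        · exact lt_min h1 hx.2
      · left; right
        have h1 : a + c < x := by
          rw [_root_.abs_of_nonneg (by linarith)] at h; linarith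
        constructor
        · exact max_lt h1 hx.1
        · have : -R ≤ u := le_max_right _ _
          linarith [hx.2]
  calc ∫⁻ x in Ioo (-R) R, ENNReal.ofReal (max |x - a| c)⁻¹
      ≤ ∫⁻ x in (Icc (a - c) (a + c) ∪ Ioo u (u + 2 * R)) ∪ Ioo (v - 2 * R) v,
          ENNReal.ofReal (max |x - a| c)⁻¹ := lintegral_mono_set hcover
    _ ≤ ((∫⁻ x in Icc (a - c) (a + c), ENNReal.ofReal (max |x - a| c)⁻¹)
          + (∫⁻ x in Ioo u (u + 2 * R), ENNReal.ofReal (max |x - a| c)⁻¹))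
          + (∫⁻ x in Ioo (v - 2 * R) v, ENNReal.ofReal (max |x - a| c)⁻¹) :=
        le_trans (lintegral_union_le _ _ _) (add_le_add (lintegral_union_le _ _ _) le_rfl)
    _ ≤ (ENNReal.ofReal 2 + ENNReal.ofReal (Real.log (1 + 2 * R / c)))
          + ENNReal.ofReal (Real.log (1 + 2 * R / c)) := by
        gcongr
        · calc ∫⁻ x in Icc (a - c) (a + c), ENNReal.ofReal (max |x - a| c)⁻¹
              ≤ ∫⁻ _ in Icc (a - c) (a + c), ENNReal.ofReal c⁻¹ := by
                apply lintegral_mono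
                intro x
                apply ENNReal.ofReal_le_ofReal
                exact inv_anti₀ hc (le_max_right _ _)
            _ = ENNReal.ofReal c⁻¹ * volume (Icc (a - c) (a + c)) := setLIntegral_const _ _
            _ = ENNReal.ofReal c⁻¹ * ENNReal.ofReal (2 * c) := by
                rw [Real.volume_Icc]; congr 1; ring
            _ = ENNReal.ofReal 2 := by
                rw [← ENNReal.ofReal_mul (by positivity)]
                congr 1; field_simp
        · calc ∫⁻ x in Ioo u (u + 2 * R), ENNReal.ofReal (max |x - a| c)⁻¹
              ≤ ∫⁻ x in Ioo u (u + 2 * R), ENNReal.ofReal (x - a)⁻¹ := by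
                apply setLIntegral_mono' measurableSet_Ioo
                intro x hx
                apply ENNReal.ofReal_le_ofReal
                have hxa : c < x - a := by
                  have : a + c ≤ u := le_max_left _ _
                  linarith [hx.1]
                apply inv_anti₀ (by linarith)
                exact le_max_of_le_left (le_abs_self _)
            _ ≤ ENNReal.ofReal (Real.log (1 + 2 * R / (u - a))) := by
                apply side
                · have : a + c ≤ u := le_max_left _ _; linarith
                · positivity
            _ ≤ ENNReal.ofReal (Real.log (1 + 2 * R / c)) := by
                apply ENNReal.ofReal_le_ofReal
                have hua : c ≤ u - a := by have : a + c ≤ u := le_max_left _ _; linarith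
                have hua' : 0 < u - a := lt_of_lt_of_le hc hua
                apply Real.log_le_log (by positivity)
                have h2 : 2 * R / (u - a) ≤ 2 * R / c :=
                  div_le_div_of_nonneg_left (by positivity) hc hua
                linarith
        · calc ∫⁻ x in Ioo (v - 2 * R) v, ENNReal.ofReal (max |x - a| c)⁻¹
              ≤ ∫⁻ x in Ioo (v - 2 * R) v, ENNReal.ofReal (a - x)⁻¹ := by
                apply setLIntegral_mono' measurableSet_Ioo
                intro x hx
                apply ENNReal.ofReal_le_ofReal
                have hxa : c < a - x := by
                  have : v ≤ a - c := min_le_left _ _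
                  linarith [hx.2]
                apply inv_anti₀ (by linarith)
                exact le_max_of_le_left (by rw [abs_sub_comm]; exact le_abs_self _)
            _ ≤ ENNReal.ofReal (Real.log (1 + 2 * R / (a - v))) := by
                apply side'
                · have : v ≤ a - c := min_le_left _ _; linarith
                · positivity
            _ ≤ ENNReal.ofReal (Real.log (1 + 2 * R / c)) := by
                apply ENNReal.ofReal_le_ofReal
                have hua : c ≤ a - v := by have : v ≤ a - c := min_le_left _ _; linarith
                have hua' : 0 < a - v := lt_of_lt_of_le hc hua
                apply Real.log_le_log (by positivity)
                have h2 : 2 * R / (a - v) ≤ 2 * R / c :=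
                  div_le_div_of_nonneg_left (by positivity) hc hua
                linarith
    _ = ENNReal.ofReal (2 + 2 * Real.log (1 + 2 * R / c)) := by
        rw [← ENNReal.ofReal_add (by norm_num) hlog0, ← ENNReal.ofReal_add (by linarith) hlog0]
        congr 1; ring

lemma imzero_null : volume {z : ℂ | z.im = 0} = 0 := by
  have h : {z : ℂ | z.im = 0} = Complex.measurableEquivRealProd ⁻¹' (univ ×ˢ ({0} : Set ℝ)) := by
    ext z
    simp [Complex.measurableEquivRealProd, Complex.equivRealProd, eq_comm]
  rw [h, Complex.volume_preserving_equiv_real_prod.measure_preimage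
    ((MeasurableSet.univ.prod (measurableSet_singleton 0)).nullMeasurableSet),
    Measure.volume_eq_prod, Measure.prod_prod]
  simp

set_option maxHeartbeats 1000000 in
/-- Proposition 1, case of condition 1: if μ has support in B(0,R) and its monotone
majorant μ* satisfies the Dini-log condition, then the potential
∬ |μ(z)|/(|z−a| |Im z|) dx dy is bounded uniformly in a ∈ ℝ. -/
theorem stmt0 (μ : ℂ → ℂ) (hμ : Measurable μ) (R : ℝ) (hR : 0 < R)
    (hsupp : Function.support μ ⊆ Metric.ball (0 : ℂ) R)
    (μstar : ℝ → ℝ) (hμstar_nonneg : ∀ t, 0 ≤ μstar t)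
    (hμstar : ∀ t : ℝ, ∀ᵐ z : ℂ, (0 < |z.im| ∧ |z.im| < |t|) → ‖μ z‖ ≤ μstar t)
    (hDini : ∫⁻ t in Ioo (0 : ℝ) R,
        ENNReal.ofReal (μstar t / t * Real.log (1 / t)) < ⊤) :
    ∃ M : ℝ, 0 < M ∧ ∀ a : ℝ,
      ∫⁻ z : ℂ, ENNReal.ofReal (‖μ z‖ / (‖z - (a : ℂ)‖ * |z.im|))
        ≤ ENNReal.ofReal M := by
  have hmin : 0 < min R 1 := lt_min hR one_pos
  set δ : ℝ := min R 1 / 4 with hδdef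
  have hδ : 0 < δ := by positivity
  have hδR : 2 * δ < R := by
    have : min R 1 ≤ R := min_le_left _ _
    rw [hδdef]; linarith
  have hδ1 : 2 * δ ≤ 1 / 2 := by
    have : min R 1 ≤ 1 := min_le_right _ _
    rw [hδdef]; linarith
  set B : ℝ := μstar (R + 1) with hBdef
  have hB : 0 ≤ B := hμstar_nonneg _
  have hlog2 : 0 < Real.log 2 := Real.log_pos (by norm_num)
  have hlog4R : 0 ≤ Real.log (1 + 4 * R) := Real.log_nonneg (by linarith)
  set C : ℝ := 8 * ((1 + Real.log (1 + 4 * R)) / Real.log 2 + 1) with hCdef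
  have hC0 : 0 < C := by
    have h1 : 0 < (1 + Real.log (1 + 4 * R)) / Real.log 2 := by positivity
    rw [hCdef]; linarith
  set DiniI := ∫⁻ t in Ioo (0 : ℝ) R, ENNReal.ofReal (μstar t / t * Real.log (1 / t))
    with hDiniI
  set total : ENNReal := ENNReal.ofReal (B / δ ^ 2) * volume (Metric.ball (0 : ℂ) R)
    + ENNReal.ofReal C * DiniI with htotaldef
  have htop : total ≠ ⊤ := by
    rw [htotaldef]
    apply ENNReal.add_ne_top.2
    constructor
    · exact ENNReal.mul_ne_top ENNReal.ofReal_ne_top measure_ball_lt_top.ne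
    · exact ENNReal.mul_ne_top ENNReal.ofReal_ne_top hDini.ne
  refine ⟨total.toReal + 1, by positivity, fun a => ?_⟩
  have key : ∫⁻ z : ℂ, ENNReal.ofReal (‖μ z‖ / (‖z - (a : ℂ)‖ * |z.im|)) ≤ total := by
    set m : ℂ → ℝ := fun z => max |z.re - a| |z.im| with hm
    have hmmeas : Measurable m :=
      ((Complex.measurable_re.sub measurable_const).abs.max Complex.measurable_im.abs)
    set H : ℂ → ENNReal := fun z =>
      if 0 < |z.im| ∧ |z.im| < δ ∧ |z.re| < R then
        ENNReal.ofReal (‖μ z‖ / (m z * |z.im|)) else 0 with hH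
    set Φ : ℂ → ℝ → ENNReal := fun z t =>
      if |z.im| < t ∧ t < 2 * |z.im| ∧ |z.im| < δ ∧ |z.re| < R then
        ENNReal.ofReal (‖μ z‖ / (m z * z.im ^ 2)) else 0 with hΦ
    have haeim : ∀ᵐ z : ℂ, z.im ≠ 0 := by
      rw [ae_iff]
      convert imzero_null using 2
      simp
    -- Step 0 : pointwise a.e. bound by indicator + H
    have step0 : ∀ᵐ z : ℂ, ENNReal.ofReal (‖μ z‖ / (‖z - (a : ℂ)‖ * |z.im|)) ≤
        (Metric.ball (0:ℂ) R).indicator (fun _ => ENNReal.ofReal (B / δ ^ 2)) z + H z := by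
      filter_upwards [haeim, hμstar (R + 1)] with z him hz1
      by_cases hμz : μ z = 0
      · simp [hμz]
      · have hzball : z ∈ Metric.ball (0:ℂ) R := hsupp hμz
        have habs : ‖z‖ < R := by simpa [Complex.dist_eq] using hzball
        have hxre : |z.re| < R := lt_of_le_of_lt (Complex.abs_re_le_norm z) habs
        have hyim : |z.im| < R := lt_of_le_of_lt (Complex.abs_im_le_norm z) habs
        have h0im : 0 < |z.im| := abs_pos.2 him
        have hrea : |z.re - a| ≤ ‖z - (a:ℂ)‖ := by simpa using Complex.abs_re_le_norm (z - a)
        have hima : |z.im| ≤ ‖z - (a:ℂ)‖ := by simpa using Complex.abs_im_le_norm (z - a)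
        have hmz : m z ≤ ‖z - (a:ℂ)‖ := max_le hrea hima
        have hmz0 : 0 < m z := lt_of_lt_of_le h0im (le_max_right _ _)
        by_cases hsmall : |z.im| < δ
        · have hHz : H z = ENNReal.ofReal (‖μ z‖ / (m z * |z.im|)) :=
            if_pos ⟨h0im, hsmall, hxre⟩
          refine le_trans ?_ (le_add_self (a := H z))
          rw [hHz]
          apply ENNReal.ofReal_le_ofReal
          exact div_le_div_of_nonneg_left (norm_nonneg _) (by positivity) (by nlinarith)
        · push_neg at hsmall
          have hμB : ‖μ z‖ ≤ B := hz1 ⟨h0im, by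
            rw [_root_.abs_of_pos (by linarith : (0:ℝ) < R + 1)]; linarith⟩
          have hden : δ ^ 2 ≤ ‖z - (a:ℂ)‖ * |z.im| := by nlinarith [norm_nonneg (z - (a:ℂ))]
          have hb : ENNReal.ofReal (‖μ z‖ / (‖z - (a:ℂ)‖ * |z.im|)) ≤
              ENNReal.ofReal (B / δ ^ 2) :=
            ENNReal.ofReal_le_ofReal (div_le_div₀ hB hμB (by positivity) hden)
          refine le_trans hb ?_
          rw [indicator_of_mem hzball]
          exact self_le_add_right _ _
    -- Step 1 : H z ≤ ∫⁻ t, Φ z t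
    have step1 : ∀ z, H z ≤ ∫⁻ t, Φ z t := by
      intro z
      by_cases hP : 0 < |z.im| ∧ |z.im| < δ ∧ |z.re| < R
      · obtain ⟨h0, hδ', hR'⟩ := hP
        have hΦeq : (fun t => Φ z t) = (Ioo |z.im| (2 * |z.im|)).indicator
            (fun _ => ENNReal.ofReal (‖μ z‖ / (m z * z.im ^ 2))) := by
          funext t
          simp only [hΦ, Set.indicator_apply, Set.mem_Ioo]
          by_cases ht : |z.im| < t ∧ t < 2 * |z.im|
          · rw [if_pos ⟨ht.1, ht.2, hδ', hR'⟩, if_pos ht]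
          · rw [if_neg (by tauto), if_neg ht]
        have hint : ∫⁻ t, Φ z t =
            ENNReal.ofReal (‖μ z‖ / (m z * z.im ^ 2)) * ENNReal.ofReal |z.im| := by
          rw [hΦeq, lintegral_indicator measurableSet_Ioo, setLIntegral_const, Real.volume_Ioo]
          congr 1
          ring
        rw [hint]
        have hHz : H z = ENNReal.ofReal (‖μ z‖ / (m z * |z.im|)) := if_pos ⟨h0, hδ', hR'⟩
        rw [hHz, ← ENNReal.ofReal_mul (by positivity)]
        apply ENNReal.ofReal_le_ofReal
        have hmz0 : 0 < m z := lt_of_lt_of_le h0 (le_max_right _ _)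
        have heq : ‖μ z‖ / (m z * z.im ^ 2) * |z.im| = ‖μ z‖ / (m z * |z.im|) := by
          have h1 : z.im ^ 2 = |z.im| * |z.im| := by rw [← _root_.sq_abs]; ring
          rw [h1, div_mul_eq_mul_div, div_eq_div_iff (by positivity) (by positivity)]
          ring
        rw [heq]
      · rw [hH]
        simp only [if_neg hP]
        exact bot_le
    -- measurability of uncurry Φ
    have hΦmeas : Measurable (Function.uncurry Φ) := by
      have heq : Function.uncurry Φ = fun p : ℂ × ℝ =>
          Set.indicator {p : ℂ × ℝ | |p.1.im| < p.2 ∧ p.2 < 2 * |p.1.im| ∧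
            |p.1.im| < δ ∧ |p.1.re| < R}
            (fun p => ENNReal.ofReal (‖μ p.1‖ / (m p.1 * p.1.im ^ 2))) p := by
        funext p
        simp only [Function.uncurry, hΦ, Set.indicator_apply, Set.mem_setOf_eq]
      rw [heq]
      have him2 : Measurable fun p : ℂ × ℝ => |p.1.im| :=
        (Complex.measurable_im.comp measurable_fst).abs
      have hset : MeasurableSet {p : ℂ × ℝ | |p.1.im| < p.2 ∧ p.2 < 2 * |p.1.im| ∧
          |p.1.im| < δ ∧ |p.1.re| < R} := by
        refine MeasurableSet.inter (measurableSet_lt him2 measurable_snd) ?_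
        refine MeasurableSet.inter (measurableSet_lt measurable_snd (him2.const_mul 2)) ?_
        refine MeasurableSet.inter (measurableSet_lt him2 measurable_const) ?_
        exact measurableSet_lt ((Complex.measurable_re.comp measurable_fst).abs) measurable_const
      exact Measurable.indicator
        (((hμ.norm.comp measurable_fst).div ((hmmeas.comp measurable_fst).mul
          ((Complex.measurable_im.comp measurable_fst).pow_const 2))).ennreal_ofReal) hset
    have step2 : ∫⁻ z, ∫⁻ t, Φ z t = ∫⁻ t, ∫⁻ z, Φ z t :=
      lintegral_lintegral_swap hΦmeas.aemeasurable
    -- Step 3 : fixed t bound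
    have step3 : ∀ t : ℝ, (∫⁻ z, Φ z t) ≤ (Ioo (0:ℝ) R).indicator
        (fun t => ENNReal.ofReal C * ENNReal.ofReal (μstar t / t * Real.log (1 / t))) t := by
      intro t
      by_cases ht : 0 < t ∧ t < 2 * δ
      · obtain ⟨ht0, ht2δ⟩ := ht
        have ht1 : t < 1 / 2 := by linarith
        have htR : t ∈ Ioo (0:ℝ) R := ⟨ht0, by linarith⟩
        rw [indicator_of_mem htR]
        set Ψ : ℂ → ENNReal := fun z =>
          if |z.im| < t ∧ t < 2 * |z.im| ∧ |z.im| < δ ∧ |z.re| < R then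
            ENNReal.ofReal (1 / (m z * z.im ^ 2)) else 0 with hΨ
        have hΨmeas : Measurable Ψ := by
          have hset : MeasurableSet {z : ℂ | |z.im| < t ∧ t < 2 * |z.im| ∧
              |z.im| < δ ∧ |z.re| < R} := by
            refine MeasurableSet.inter (measurableSet_lt Complex.measurable_im.abs
              measurable_const) ?_
            refine MeasurableSet.inter (measurableSet_lt measurable_const
              (Complex.measurable_im.abs.const_mul 2)) ?_
            refine MeasurableSet.inter (measurableSet_lt Complex.measurable_im.abs
              measurable_const) ?_
            exact measurableSet_lt Complex.measurable_re.abs measurable_const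
          have : Ψ = Set.indicator {z : ℂ | |z.im| < t ∧ t < 2 * |z.im| ∧
              |z.im| < δ ∧ |z.re| < R}
              (fun z => ENNReal.ofReal (1 / (m z * z.im ^ 2))) := by
            funext z
            simp only [hΨ, Set.indicator_apply, Set.mem_setOf_eq]
          rw [this]
          exact Measurable.indicator ((measurable_const.div
            (hmmeas.mul (Complex.measurable_im.pow_const 2))).ennreal_ofReal) hset
        have c1 : ∫⁻ z, Φ z t ≤ ENNReal.ofReal (μstar t) * ∫⁻ z, Ψ z := by
          rw [← lintegral_const_mul _ hΨmeas]
          apply lintegral_mono_ae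
          filter_upwards [hμstar t] with z hz
          by_cases hc : |z.im| < t ∧ t < 2 * |z.im| ∧ |z.im| < δ ∧ |z.re| < R
          · have h0 : 0 < |z.im| := by
              rcases hc with ⟨h1, h2, _⟩
              linarith
            have hμz : ‖μ z‖ ≤ μstar t := hz ⟨h0, by rw [_root_.abs_of_pos ht0]; exact hc.1⟩
            simp only [hΦ, hΨ, if_pos hc]
            rw [← ENNReal.ofReal_mul (hμstar_nonneg t), mul_one_div]
            apply ENNReal.ofReal_le_ofReal
            gcongr
            all_goals positivity
          · simp only [hΦ, hΨ, if_neg hc, mul_zero, le_refl]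
        set χx : ℝ → ENNReal := fun x =>
          (Ioo (-R) R).indicator (fun x => ENNReal.ofReal (max |x - a| (t / 2))⁻¹) x with hχx
        set χy : ℝ → ENNReal := fun y =>
          ({y : ℝ | t / 2 < |y| ∧ |y| < t}).indicator 1 y with hχy
        have hχxmeas : Measurable χx :=
          Measurable.indicator ((((measurable_id.sub measurable_const).abs.max
            measurable_const).inv).ennreal_ofReal) measurableSet_Ioo
        have hSy : MeasurableSet {y : ℝ | t / 2 < |y| ∧ |y| < t} :=
          (measurableSet_lt measurable_const measurable_id.abs).inter
            (measurableSet_lt measurable_id.abs measurable_const)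
        have hχymeas : Measurable χy := Measurable.indicator measurable_const hSy
        have c2 : ∫⁻ z, Ψ z ≤ ENNReal.ofReal (4 / t ^ 2) * ∫⁻ z : ℂ, χx z.re * χy z.im := by
          have hmul : Measurable fun z : ℂ => χx z.re * χy z.im :=
            (hχxmeas.comp Complex.measurable_re).mul (hχymeas.comp Complex.measurable_im)
          rw [← lintegral_const_mul _ hmul]
          apply lintegral_mono
          intro z
          by_cases hc : |z.im| < t ∧ t < 2 * |z.im| ∧ |z.im| < δ ∧ |z.re| < R
          · simp only [hΨ, if_pos hc]
            have h1 : t / 2 < |z.im| := by linarith [hc.2.1]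
            have h2 : |z.im| < t := hc.1
            have hxmem : z.re ∈ Ioo (-R) R := by
              have := abs_lt.mp hc.2.2.2
              exact ⟨this.1, this.2⟩
            have hymem : z.im ∈ {y : ℝ | t / 2 < |y| ∧ |y| < t} := ⟨h1, h2⟩
            rw [hχx, hχy]
            simp only [indicator_of_mem hxmem, indicator_of_mem hymem, Pi.one_apply, mul_one]
            have hm' : 0 < max |z.re - a| (t / 2) := lt_max_of_lt_right (by positivity)
            have hmz0 : 0 < m z := lt_of_lt_of_le (by linarith) (le_max_right _ _)
            have hmm' : max |z.re - a| (t / 2) ≤ m z := max_le_max le_rfl h1.le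
            rw [← ENNReal.ofReal_mul (by positivity)]
            apply ENNReal.ofReal_le_ofReal
            have hy2 : t ^ 2 / 4 ≤ z.im ^ 2 := by
              rw [← _root_.sq_abs z.im]
              have hms := mul_self_le_mul_self (by positivity : (0:ℝ) ≤ t / 2) h1.le
              nlinarith [hms]
            calc 1 / (m z * z.im ^ 2)
                ≤ 1 / (max |z.re - a| (t / 2) * (t ^ 2 / 4)) := by
                  apply div_le_div_of_nonneg_left one_pos.le (by positivity) (by nlinarith)
              _ = 4 / t ^ 2 * (max |z.re - a| (t / 2))⁻¹ := by
                  field_simp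
          · simp only [hΨ, if_neg hc]
            exact bot_le
        have c3 : ∫⁻ z : ℂ, χx z.re * χy z.im = (∫⁻ x, χx x) * ∫⁻ y, χy y := by
          have hcomp := Complex.volume_preserving_equiv_real_prod.lintegral_comp
            (f := fun p : ℝ × ℝ => χx p.1 * χy p.2)
            ((hχxmeas.comp measurable_fst).mul (hχymeas.comp measurable_snd))
          calc ∫⁻ z : ℂ, χx z.re * χy z.im
              = ∫⁻ p : ℝ × ℝ, χx p.1 * χy p.2 := hcomp
            _ = (∫⁻ x, χx x) * ∫⁻ y, χy y := by
                rw [Measure.volume_eq_prod]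
                exact lintegral_prod_mul hχxmeas.aemeasurable hχymeas.aemeasurable
        have c4 : ∫⁻ y, χy y ≤ ENNReal.ofReal t := by
          rw [hχy, lintegral_indicator_one hSy]
          have hsub : {y : ℝ | t / 2 < |y| ∧ |y| < t} ⊆ Ioo (t / 2) t ∪ Ioo (-t) (-(t / 2)) := by
            intro y hy
            simp only [Set.mem_setOf_eq] at hy
            rcases le_or_gt 0 y with h | h
            · left
              rw [_root_.abs_of_nonneg h] at hy
              exact ⟨hy.1, hy.2⟩
            · right
              rw [abs_of_neg h] at hy
              constructor <;> linarith [hy.1, hy.2]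
          calc volume {y : ℝ | t / 2 < |y| ∧ |y| < t}
              ≤ volume (Ioo (t / 2) t ∪ Ioo (-t) (-(t / 2))) := measure_mono hsub
            _ ≤ volume (Ioo (t / 2) t) + volume (Ioo (-t) (-(t / 2))) := measure_union_le _ _
            _ = ENNReal.ofReal (t / 2) + ENNReal.ofReal (t / 2) := by
                rw [Real.volume_Ioo, Real.volume_Ioo]
                congr 1 <;> · congr 1; ring
            _ = ENNReal.ofReal t := by
                rw [← ENNReal.ofReal_add (by positivity) (by positivity)]
                congr 1
                ring
        have c5 : ∫⁻ x, χx x ≤ ENNReal.ofReal (2 + 2 * Real.log (1 + 4 * R / t)) := by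
          rw [hχx, lintegral_indicator measurableSet_Ioo]
          have hx := xlem R a (t / 2) hR (by positivity)
          have harg : 1 + 2 * R / (t / 2) = 1 + 4 * R / t := by
            field_simp
            ring
          rwa [harg] at hx
        -- real inequality
        have hL0 : 0 ≤ Real.log (1 + 4 * R / t) := Real.log_nonneg (by
          have : 0 ≤ 4 * R / t := by positivity
          linarith)
        have hlog1t : Real.log 2 ≤ Real.log (1 / t) := by
          apply Real.log_le_log (by norm_num)
          rw [le_div_iff₀ ht0]
          linarith
        have hLb : Real.log (1 + 4 * R / t) ≤ Real.log (1 + 4 * R) + Real.log (1 / t) := by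
          have h' : 1 + 4 * R / t ≤ (1 + 4 * R) * (1 / t) := by
            rw [mul_one_div, le_div_iff₀ ht0]
            have he : (1 + 4 * R / t) * t = t + 4 * R := by field_simp
            rw [he]
            linarith
          calc Real.log (1 + 4 * R / t) ≤ Real.log ((1 + 4 * R) * (1 / t)) :=
                Real.log_le_log (by positivity) h'
            _ = Real.log (1 + 4 * R) + Real.log (1 / t) :=
                Real.log_mul (by positivity) (by positivity)
        have hreal : μstar t * (4 / t ^ 2 * ((2 + 2 * Real.log (1 + 4 * R / t)) * t)) ≤
            C * (μstar t / t * Real.log (1 / t)) := by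
          set L := Real.log (1 + 4 * R / t)
          set D := (1 + Real.log (1 + 4 * R)) / Real.log 2 with hD
          have hD0 : 0 ≤ D := div_nonneg (by linarith) hlog2.le
          have hDlog : D * Real.log 2 = 1 + Real.log (1 + 4 * R) :=
            div_mul_cancel₀ _ (ne_of_gt hlog2)
          have hkey : 8 * (1 + L) ≤ C * Real.log (1 / t) := by
            have h1 : D * Real.log 2 ≤ D * Real.log (1 / t) :=
              mul_le_mul_of_nonneg_left hlog1t hD0
            rw [hCdef]
            nlinarith
          have hLHS : 4 / t ^ 2 * ((2 + 2 * L) * t) = 8 * (1 + L) / t := by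
            field_simp
            ring
          rw [hLHS]
          have hμt : 0 ≤ μstar t / t := div_nonneg (hμstar_nonneg t) ht0.le
          calc μstar t * (8 * (1 + L) / t) = μstar t / t * (8 * (1 + L)) := by ring
            _ ≤ μstar t / t * (C * Real.log (1 / t)) :=
                mul_le_mul_of_nonneg_left hkey hμt
            _ = C * (μstar t / t * Real.log (1 / t)) := by ring
        calc ∫⁻ z, Φ z t ≤ ENNReal.ofReal (μstar t) * ∫⁻ z, Ψ z := c1
          _ ≤ ENNReal.ofReal (μstar t) *
              (ENNReal.ofReal (4 / t ^ 2) * ((∫⁻ x, χx x) * ∫⁻ y, χy y)) := by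
              rw [← c3]
              exact mul_le_mul_right c2 _
          _ ≤ ENNReal.ofReal (μstar t) * (ENNReal.ofReal (4 / t ^ 2) *
              (ENNReal.ofReal (2 + 2 * Real.log (1 + 4 * R / t)) * ENNReal.ofReal t)) := by
              gcongr
          _ = ENNReal.ofReal (μstar t * (4 / t ^ 2 *
              ((2 + 2 * Real.log (1 + 4 * R / t)) * t))) := by
              rw [← ENNReal.ofReal_mul (by positivity), ← ENNReal.ofReal_mul (by positivity),
                ← ENNReal.ofReal_mul (hμstar_nonneg t)]
          _ ≤ ENNReal.ofReal (C * (μstar t / t * Real.log (1 / t))) :=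
              ENNReal.ofReal_le_ofReal hreal
          _ = ENNReal.ofReal C * ENNReal.ofReal (μstar t / t * Real.log (1 / t)) :=
              ENNReal.ofReal_mul hC0.le
      · have hzero : ∀ z, Φ z t = 0 := by
          intro z
          rw [hΦ]
          apply if_neg
          rintro ⟨h1, h2, h3, -⟩
          have h0 : 0 < |z.im| := by linarith
          exact ht ⟨by linarith, by linarith⟩
        simp only [hzero, lintegral_zero]
        exact bot_le
    -- assemble
    have hindmeas : Measurable ((Metric.ball (0:ℂ) R).indicator
        (fun _ : ℂ => ENNReal.ofReal (B / δ ^ 2))) :=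
      measurable_const.indicator measurableSet_ball
    calc ∫⁻ z : ℂ, ENNReal.ofReal (‖μ z‖ / (‖z - (a : ℂ)‖ * |z.im|))
        ≤ ∫⁻ z : ℂ, ((Metric.ball (0:ℂ) R).indicator
            (fun _ => ENNReal.ofReal (B / δ ^ 2)) z + H z) := lintegral_mono_ae step0
      _ = (∫⁻ z : ℂ, (Metric.ball (0:ℂ) R).indicator
            (fun _ => ENNReal.ofReal (B / δ ^ 2)) z) + ∫⁻ z, H z :=
          lintegral_add_left hindmeas _
      _ ≤ ENNReal.ofReal (B / δ ^ 2) * volume (Metric.ball (0:ℂ) R) +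
            ENNReal.ofReal C * DiniI := by
          gcongr
          · rw [lintegral_indicator_const measurableSet_ball]
          · calc ∫⁻ z, H z ≤ ∫⁻ z, ∫⁻ t, Φ z t := lintegral_mono step1
              _ = ∫⁻ t, ∫⁻ z, Φ z t := step2
              _ ≤ ∫⁻ t, (Ioo (0:ℝ) R).indicator (fun t => ENNReal.ofReal C *
                    ENNReal.ofReal (μstar t / t * Real.log (1 / t))) t :=
                  lintegral_mono step3
              _ = ∫⁻ t in Ioo (0:ℝ) R, ENNReal.ofReal C *
                    ENNReal.ofReal (μstar t / t * Real.log (1 / t)) :=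
                  lintegral_indicator measurableSet_Ioo _
              _ = ENNReal.ofReal C * DiniI := by
                  rw [hDiniI]
                  exact lintegral_const_mul' _ _ ENNReal.ofReal_ne_top
      _ = total := htotaldef.symm
  refine key.trans ?_
  conv_lhs => rw [← ENNReal.ofReal_toReal htop]
  exact ENNReal.ofReal_le_ofReal (by linarith)
end

section
/- Define g(z) = 2z + (1−z)/log(1−z) on the disk B(9/10, 1/10) (using the principal branch of log, noting 1−z lies in the right half-plane there), and f(z) = g((9+z)/10) for z ∈ 𝔻. Then f'(z) = (1/10)·(2 − 1/log(1−h(z)) + 1/(log(1−h(z)))²) where h(z) = (9+z)/10, and f'(z) ≠ 0 for all z ∈ 𝔻. -/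
open Complex Metric

/-- The example of Section 5: with h(z) = (9+z)/10 and
f(z) = 2h(z) + (1−h(z))/log(1−h(z)) on 𝔻, one has
f'(z) = (1/10)(2 − 1/log(1−h(z)) + 1/(log(1−h(z)))²), and f'(z) ≠ 0 on 𝔻. -/
theorem stmt14 (h f : ℂ → ℂ)
    (hh : ∀ z : ℂ, h z = (9 + z) / 10)
    (hf : ∀ z : ℂ, f z = 2 * h z + (1 - h z) / Complex.log (1 - h z)) :
    ∀ z ∈ ball (0 : ℂ) 1,
      HasDerivAt f ((1 / 10) * (2 - 1 / Complex.log (1 - h z)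
        + 1 / (Complex.log (1 - h z)) ^ 2)) z ∧
      (1 / 10) * (2 - 1 / Complex.log (1 - h z)
        + 1 / (Complex.log (1 - h z)) ^ 2) ≠ 0 := by
  have hfun : f = fun z => 2 * ((9 + z) / 10) + (1 - (9 + z) / 10) /
      Complex.log (1 - (9 + z) / 10) := by
    funext z; rw [hf, hh]
  have huw : ∀ z : ℂ, 1 - (9 + z) / 10 = (1 - z) / 10 := by intro z; ring
  intro z hz
  have hz1 : ‖z‖ < 1 := by simpa using mem_ball_zero_iff.mp hz
  obtain ⟨w, hwdef⟩ : ∃ w : ℂ, w = (1 - z) / 10 := ⟨_, rfl⟩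
  have hw1 : 1 - h z = w := by rw [hh, hwdef]; ring
  -- basic estimates on w
  have hzre : z.re < 1 := lt_of_le_of_lt (Complex.re_le_norm z) hz1
  have hwre : 0 < w.re := by
    have hre : w.re = (1 - z.re) / 10 := by
      rw [hwdef, show (10 : ℂ) = ((10 : ℝ) : ℂ) by norm_num, Complex.div_ofReal_re]
      simp
    rw [hre]; linarith
  have hw0 : w ≠ 0 := by
    intro h0; rw [h0] at hwre; simp at hwre
  have hwabs : ‖w‖ < 1 / 5 := by
    have h1 : ‖1 - z‖ < 2 := by
      calc ‖1 - z‖ ≤ ‖(1:ℂ)‖ + ‖z‖ := by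
            simpa [sub_eq_add_neg] using norm_add_le (1:ℂ) (-z)
        _ < 2 := by simp; linarith
    have : ‖w‖ = ‖1 - z‖ / 10 := by
      rw [hwdef, norm_div]; simp
    rw [this]; linarith
  obtain ⟨L, hLdef⟩ : ∃ L : ℂ, L = Complex.log w := ⟨_, rfl⟩
  have hLre : L.re = Real.log ‖w‖ := by rw [hLdef]; exact Complex.log_re w
  have hlog5 : (1 : ℝ) < Real.log 5 := by
    rw [show (1:ℝ) = Real.log (Real.exp 1) by simp]
    apply Real.log_lt_log (Real.exp_pos 1)
    calc Real.exp 1 < 2.7182818286 := Real.exp_one_lt_d9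
      _ < 5 := by norm_num
  have hLabs : (1 : ℝ) < ‖L‖ := by
    have h1 : L.re < -Real.log 5 := by
      rw [hLre]
      have habs0 : 0 < ‖w‖ := norm_pos_iff.mpr hw0
      have h2 : Real.log ‖w‖ < Real.log (1/5) := Real.log_lt_log habs0 hwabs
      rw [Real.log_div one_ne_zero (by norm_num), Real.log_one] at h2
      linarith
    have h2 : -L.re ≤ ‖L‖ := by
      have h3 := Complex.abs_re_le_norm L
      have h4 := neg_abs_le L.re
      linarith [le_abs_self L.re]
    calc (1:ℝ) < Real.log 5 := hlog5
      _ < -L.re := by linarith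
      _ ≤ ‖L‖ := h2
  have hL0 : L ≠ 0 := by
    intro h0; rw [h0] at hLabs; simp at hLabs; linarith
  -- derivative
  have hu : HasDerivAt (fun z : ℂ => 1 - (9 + z) / 10) (-(1/10)) z := by
    have : HasDerivAt (fun z : ℂ => (9 + z) / 10) (1/10) z := by
      simpa using ((hasDerivAt_id z).const_add 9).div_const 10
    simpa using this.const_sub 1
  have hu' : (fun z : ℂ => 1 - (9 + z) / 10) z = w := by rw [hwdef]; exact huw z
  have hlogd : HasDerivAt (fun z : ℂ => Complex.log (1 - (9 + z) / 10))
      (w⁻¹ * (-(1/10))) z := by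
    have h1 : HasDerivAt Complex.log w⁻¹ ((fun z : ℂ => 1 - (9 + z) / 10) z) := by
      rw [hu']; exact Complex.hasDerivAt_log (Or.inl hwre)
    exact h1.comp z hu
  have hden : Complex.log ((fun z : ℂ => 1 - (9 + z) / 10) z) ≠ 0 := by
    rw [hu', ← hLdef]; exact hL0
  have hquot : HasDerivAt (fun z : ℂ => (1 - (9 + z) / 10) /
      Complex.log (1 - (9 + z) / 10))
      ((-(1/10) * L - w * (w⁻¹ * (-(1/10)))) / L ^ 2) z := by
    have := hu.div hlogd hden
    simp only [hu', ← hLdef] at this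
    exact this
  have h2h : HasDerivAt (fun z : ℂ => 2 * ((9 + z) / 10)) (2 * (1/10)) z := by
    exact (((hasDerivAt_id z).const_add 9).div_const 10).const_mul 2
  have htot := h2h.add hquot
  have hD : 2 * (1/10 : ℂ) + (-(1/10) * L - w * (w⁻¹ * (-(1/10)))) / L ^ 2
      = (1 / 10) * (2 - 1 / Complex.log (1 - h z) + 1 / (Complex.log (1 - h z)) ^ 2) := by
    rw [hw1, ← hLdef]
    rw [show w * (w⁻¹ * (-(1/10) : ℂ)) = -(1/10) by
      rw [← mul_assoc, mul_inv_cancel₀ hw0, one_mul]]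
    field_simp
    ring
  refine ⟨?_, ?_⟩
  · rw [hfun, ← hD]
    exact htot
  · -- nonvanishing
    rw [hw1, ← hLdef]
    intro hcon
    have h1 : (2 : ℂ) - 1 / L + 1 / L ^ 2 = 0 := by
      have h10 : (1/10 : ℂ) ≠ 0 := by norm_num
      exact (mul_eq_zero.mp hcon).resolve_left h10
    have h2 : L * (2 * L ^ 2 - L + 1) = 0 := by
      have hL2 : L ^ 2 ≠ 0 := pow_ne_zero 2 hL0
      field_simp at h1
      linear_combination L * h1
    have h3 : 2 * L ^ 2 - L + 1 = 0 := (mul_eq_zero.mp h2).resolve_left hL0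
    have h4 : 2 * L ^ 2 = L - 1 := by linear_combination h3
    have h5 : 2 * ‖L‖ ^ 2 ≤ ‖L‖ + 1 := by
      calc 2 * ‖L‖ ^ 2 = ‖2 * L ^ 2‖ := by
            rw [norm_mul, norm_pow]; simp
        _ = ‖L - 1‖ := by rw [h4]
        _ ≤ ‖L‖ + ‖(1:ℂ)‖ := by
            simpa [sub_eq_add_neg] using norm_add_le L (-1)
        _ = ‖L‖ + 1 := by simp
    nlinarith [hLabs]
end

section
/- For R > 0 small and a ∈ [−R, R], ∫_{−R}^{R} ∫_{−R}^{R} (μ*(|y|)/|y|)·(1/(|x−a|+|y|)) dx dy ≤ C ∫₀^{R} (μ*(t)/t)·log(1/t) dt, where μ* : (0,∞) → ℝ≥0 is nondecreasing, R < 1/e, and C is an absolute constant. -/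
open MeasureTheory Set
open scoped ENNReal

lemma aux_cont (a s : ℝ) (hs : 0 < s) : Continuous fun x : ℝ => 1 / (|x - a| + s) := by
  apply Continuous.div continuous_const
  · exact (continuous_abs.comp (continuous_id.sub continuous_const)).add continuous_const
  · intro x
    have : (0:ℝ) < |x - a| + s := by positivity
    exact ne_of_gt this

lemma aux_integral (s R a : ℝ) (hs : 0 < s) (hR : 0 < R) (ha : |a| ≤ R) :
    ∫ x in (-R)..R, 1 / (|x - a| + s) ≤ 2 * Real.log ((2 * R + s) / s) := by
  have hcont : Continuous fun x : ℝ => 1 / (|x| + s) := by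
    simpa using aux_cont 0 s hs
  have habs := abs_le.1 ha
  have h1 : (∫ x in (-R)..R, 1 / (|x - a| + s))
      = ∫ x in (-R - a)..(R - a), 1 / (|x| + s) := by
    exact intervalIntegral.integral_comp_sub_right (fun x => 1 / (|x| + s)) a
  have h2 : (∫ x in (-R - a)..(R - a), 1 / (|x| + s))
      ≤ ∫ x in (-(2*R))..(2*R), 1 / (|x| + s) := by
    apply intervalIntegral.integral_mono_interval (by linarith) (by linarith) (by linarith)
    · filter_upwards with x
      positivity
    · exact hcont.intervalIntegrable _ _
  have hI1 : (∫ x in (0:ℝ)..(2*R), 1 / (|x| + s)) = Real.log ((2*R + s) / s) := by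
    have e1 : (∫ x in (0:ℝ)..(2*R), 1 / (|x| + s)) = ∫ x in (0:ℝ)..(2*R), 1 / (x + s) := by
      apply intervalIntegral.integral_congr
      intro x hx
      rw [uIcc_of_le (by linarith)] at hx
      simp only [abs_of_nonneg hx.1]
    rw [e1]
    have e2 : (∫ x in (0:ℝ)..(2*R), 1 / (x + s)) = ∫ x in (0+s)..(2*R+s), 1 / x :=
      intervalIntegral.integral_comp_add_right (fun x => 1 / x) s
    rw [e2, zero_add, integral_one_div]
    intro h
    rw [uIcc_of_le (by linarith)] at h
    linarith [h.1]
  have hI2 : (∫ x in (-(2*R))..(0:ℝ), 1 / (|x| + s)) = Real.log ((2*R + s) / s) := by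
    have e1 : (∫ x in (-(2*R))..(0:ℝ), 1 / (|x| + s))
        = ∫ x in (-(2*R))..(0:ℝ), (fun u => 1 / (u + s)) (-x) := by
      apply intervalIntegral.integral_congr
      intro x hx
      rw [uIcc_of_le (by linarith)] at hx
      simp only [abs_of_nonpos hx.2]
    rw [e1, intervalIntegral.integral_comp_neg (fun u => 1 / (u + s)), neg_zero, neg_neg]
    have e2 : (∫ x in (0:ℝ)..(2*R), 1 / (x + s)) = ∫ x in (0+s)..(2*R+s), 1 / x :=
      intervalIntegral.integral_comp_add_right (fun x => 1 / x) s
    rw [e2, zero_add, integral_one_div]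
    intro h
    rw [uIcc_of_le (by linarith)] at h
    linarith [h.1]
  have h3 : (∫ x in (-(2*R))..(2*R), 1 / (|x| + s)) = 2 * Real.log ((2*R + s) / s) := by
    rw [← intervalIntegral.integral_add_adjacent_intervals (b := (0:ℝ))
        (hcont.intervalIntegrable _ _) (hcont.intervalIntegrable _ _), hI1, hI2]
    ring
  linarith [h1, h2, h3]

lemma aux_log (s R : ℝ) (hs : 0 < s) (hsR : s ≤ R) (hRe : R < 1 / Real.exp 1) :
    2 * Real.log ((2 * R + s) / s) ≤ 4 * Real.log (1 / s) := by
  have he : (2:ℝ) ≤ Real.exp 1 := by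
    have := Real.add_one_le_exp 1; linarith
  have hR2 : R < 1/2 := by
    have : 1 / Real.exp 1 ≤ 1/2 := by
      apply one_div_le_one_div_of_le <;> linarith
    linarith
  have hs1 : s < 1/2 := lt_of_le_of_lt hsR hR2
  have hpos : (0:ℝ) < 2 * R + s := by linarith
  rw [Real.log_div (by linarith) (ne_of_gt hs), one_div, Real.log_inv]
  have hkey : Real.log (2 * R + s) + Real.log s ≤ 0 := by
    rw [← Real.log_mul (ne_of_gt hpos) (ne_of_gt hs)]
    apply Real.log_nonpos (by positivity)
    nlinarith
  linarith

/-- Central computation of Proposition 1, case 1: for μ* nondecreasing and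
nonnegative, 0 < R < 1/e and a ∈ [−R, R],
∫_{−R}^{R}∫_{−R}^{R} (μ*(|y|)/|y|)(1/(|x−a|+|y|)) dx dy
  ≤ C ∫₀^{R} (μ*(t)/t) log(1/t) dt with an absolute constant C. -/
theorem stmt16 :
    ∃ C : ℝ, 0 < C ∧
      ∀ μstar : ℝ → ℝ, (∀ t, 0 ≤ μstar t) → MonotoneOn μstar (Ioi (0 : ℝ)) →
      ∀ R : ℝ, 0 < R → R < 1 / Real.exp 1 → ∀ a : ℝ, |a| ≤ R →
        ∫⁻ y in Ioc (-R) R, ∫⁻ x in Ioc (-R) R,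
            ENNReal.ofReal (μstar |y| / |y| * (1 / (|x - a| + |y|)))
          ≤ ENNReal.ofReal C *
            ∫⁻ t in Ioo (0 : ℝ) R,
              ENNReal.ofReal (μstar t / t * Real.log (1 / t)) := by
  refine ⟨8, by norm_num, ?_⟩
  intro μstar hnn hmono R hR hRe a ha
  set g : ℝ → ℝ := fun t => μstar t / t * Real.log (1 / t) with hg
  set H : ℝ → ℝ≥0∞ := fun t => ENNReal.ofReal (g t) with hH
  -- inner bound
  have hinner : ∀ y ∈ Ioc (-R) R,
      (∫⁻ x in Ioc (-R) R, ENNReal.ofReal (μstar |y| / |y| * (1 / (|x - a| + |y|))))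
        ≤ ENNReal.ofReal 4 * H |y| := by
    intro y hy
    rcases eq_or_ne y 0 with rfl | hy0
    · simp
    · set s := |y| with hsdef
      have hs : 0 < s := abs_pos.2 hy0
      have hsR : s ≤ R := abs_le.2 ⟨hy.1.le, hy.2⟩
      set c := μstar s / s with hc
      have hc0 : 0 ≤ c := div_nonneg (hnn s) hs.le
      have hX : (∫⁻ x in Ioc (-R) R, ENNReal.ofReal (1 / (|x - a| + s)))
          ≤ ENNReal.ofReal (4 * Real.log (1 / s)) := by
        have hcont := aux_cont a s hs
        have hint : IntegrableOn (fun x => 1 / (|x - a| + s)) (Ioc (-R) R) volume :=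
          hcont.integrableOn_Ioc
        rw [← ofReal_integral_eq_lintegral_ofReal hint
            (ae_of_all _ fun x => by positivity)]
        apply ENNReal.ofReal_le_ofReal
        have : (∫ x in Ioc (-R) R, 1 / (|x - a| + s))
            = ∫ x in (-R)..R, 1 / (|x - a| + s) := by
          rw [intervalIntegral.integral_of_le (by linarith)]
        rw [this]
        calc ∫ x in (-R)..R, 1 / (|x - a| + s)
            ≤ 2 * Real.log ((2 * R + s) / s) := aux_integral s R a hs hR ha
          _ ≤ 4 * Real.log (1 / s) := aux_log s R hs hsR hRe
      calc ∫⁻ x in Ioc (-R) R, ENNReal.ofReal (c * (1 / (|x - a| + s)))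
          = ∫⁻ x in Ioc (-R) R, ENNReal.ofReal c * ENNReal.ofReal (1 / (|x - a| + s)) := by
            simp_rw [ENNReal.ofReal_mul hc0]
        _ = ENNReal.ofReal c * ∫⁻ x in Ioc (-R) R, ENNReal.ofReal (1 / (|x - a| + s)) :=
            lintegral_const_mul' _ _ ENNReal.ofReal_ne_top
        _ ≤ ENNReal.ofReal c * ENNReal.ofReal (4 * Real.log (1 / s)) :=
            mul_le_mul_right hX _
        _ = ENNReal.ofReal (c * (4 * Real.log (1 / s))) := (ENNReal.ofReal_mul hc0).symm
        _ = ENNReal.ofReal (4 * (c * Real.log (1 / s))) := by ring_nf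
        _ = ENNReal.ofReal 4 * H s := by
            rw [ENNReal.ofReal_mul (by norm_num)]
  have step1 : (∫⁻ y in Ioc (-R) R, ∫⁻ x in Ioc (-R) R,
      ENNReal.ofReal (μstar |y| / |y| * (1 / (|x - a| + |y|))))
      ≤ ∫⁻ y in Ioc (-R) R, ENNReal.ofReal 4 * H |y| := by
    apply lintegral_mono_ae
    filter_upwards [ae_restrict_mem measurableSet_Ioc] with y hy
    exact hinner y hy
  have step2 : (∫⁻ y in Ioc (-R) R, ENNReal.ofReal 4 * H |y|)
      = ENNReal.ofReal 4 * ∫⁻ y in Ioc (-R) R, H |y| :=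
    lintegral_const_mul' _ _ ENNReal.ofReal_ne_top
  -- symmetry
  have hsplit : (∫⁻ y in Ioc (-R) R, H |y|)
      = (∫⁻ y in Ioc (-R) 0, H |y|) + ∫⁻ y in Ioc (0:ℝ) R, H |y| := by
    rw [← Ioc_union_Ioc_eq_Ioc (by linarith : -R ≤ (0:ℝ)) hR.le,
      lintegral_union measurableSet_Ioc (Ioc_disjoint_Ioc_of_le le_rfl)]
  have hpos_piece : (∫⁻ y in Ioc (0:ℝ) R, H |y|) = ∫⁻ t in Ioo (0:ℝ) R, H t := by
    rw [← setLIntegral_congr Ioo_ae_eq_Ioc]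
    apply lintegral_congr_ae
    filter_upwards [ae_restrict_mem measurableSet_Ioo] with y hy
    rw [abs_of_pos hy.1]
  have hneg_piece : (∫⁻ y in Ioc (-R) 0, H |y|) = ∫⁻ t in Ioo (0:ℝ) R, H t := by
    have e1 : (∫⁻ y in Ioc (-R) 0, H |y|) = ∫⁻ y in Ioc (-R) 0, H (-y) := by
      apply lintegral_congr_ae
      filter_upwards [ae_restrict_mem measurableSet_Ioc] with y hy
      rw [abs_of_nonpos hy.2]
    have e2 : (Neg.neg ⁻¹' Ico (0:ℝ) R) = Ioc (-R) 0 := by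
      ext x
      simp only [mem_preimage, mem_Ico, mem_Ioc]
      constructor <;> intro h <;> constructor <;> linarith [h.1, h.2]
    have e3 : (∫⁻ y in Ioc (-R) 0, H (-y)) = ∫⁻ t in Ico (0:ℝ) R, H t := by
      rw [← e2]
      exact (Measure.measurePreserving_neg (volume : Measure ℝ)).setLIntegral_comp_preimage_emb
        (MeasurableEquiv.neg ℝ).measurableEmbedding H _
    rw [e1, e3, ← setLIntegral_congr Ioo_ae_eq_Ico]
  calc ∫⁻ y in Ioc (-R) R, ∫⁻ x in Ioc (-R) R,
        ENNReal.ofReal (μstar |y| / |y| * (1 / (|x - a| + |y|)))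
      ≤ ENNReal.ofReal 4 * ∫⁻ y in Ioc (-R) R, H |y| := step2 ▸ step1
    _ = ENNReal.ofReal 4 * (2 * ∫⁻ t in Ioo (0:ℝ) R, H t) := by
        rw [hsplit, hneg_piece, hpos_piece, two_mul]
    _ = ENNReal.ofReal 8 * ∫⁻ t in Ioo (0:ℝ) R, H t := by
        rw [← mul_assoc]
        congr 1
        rw [show ((2:ℝ≥0∞)) = ENNReal.ofReal 2 by simp, ← ENNReal.ofReal_mul (by norm_num)]
        norm_num
end
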